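/- arXiv:2209.09192 — 7 statements merged into one kernel-verified Lean document; each statement's English description precedes it below -/
import Mathlib

section
/- Let N ≥ 2 and let A_1, …, A_{N+1} be affinely independent points in the Euclidean space ℝ^N, with positive weights B_1, …, B_{N+1}, and write a_{ij} = dist(A_i, A_j). If for every index k ∈ {1, …, N+1} the strict inequality Σ_{i<j, i≠k, j≠k} B_i·B_j·(a_{ik}² + a_{jk}² − a_{ij}²)/(2·a_{ik}·a_{jk}) > (B_k² − Σ_{i≠k} B_i²)/2 holds, then every minimizer x₀ of the weighted Fermat objective f(x) = Σ_{i=1}^{N+1} B_i·dist(x, A_i) satisfies x₀ ≠ A_k for all k (the weighted Fermat–Torricelli point is floating, i.e., not a vertex of the simplex). -/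
open Finset

private lemma loc_aux {E : Type*} [NormedAddCommGroup E] [InnerProductSpace ℝ E]
    (x y z : E) :
    (inner ℝ (x - z) (y - z) : ℝ) = (dist x z ^ 2 + dist y z ^ 2 - dist x y ^ 2) / 2 := by
  have h := norm_sub_sq_real (x - z) (y - z)
  rw [sub_sub_sub_cancel_right] at h
  rw [dist_eq_norm, dist_eq_norm, dist_eq_norm]
  linarith

set_option maxHeartbeats 1000000

/-- **Weighted Fermat–Fréchet solution, floating case.**
If for every vertex index `k` the strict inequality
`∑_{i<j, i≠k, j≠k} B i * B j * (a_ik² + a_jk² − a_ij²)/(2 a_ik a_jk)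
  > (B k² − ∑_{i≠k} B i²)/2`
holds, then any minimizer of the weighted Fermat objective is not a vertex. -/
theorem weighted_fermat_floating
    (N : ℕ) (hN : 2 ≤ N)
    (A : Fin (N + 1) → EuclideanSpace ℝ (Fin N))
    (hA : AffineIndependent ℝ A)
    (B : Fin (N + 1) → ℝ) (hB : ∀ i, 0 < B i)
    (h : ∀ k : Fin (N + 1),
      (B k ^ 2 - ∑ i ∈ Finset.univ.erase k, B i ^ 2) / 2 <
        ∑ p ∈ Finset.univ.filter
            (fun p : Fin (N + 1) × Fin (N + 1) => p.1 < p.2 ∧ p.1 ≠ k ∧ p.2 ≠ k),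
          B p.1 * B p.2 *
            (dist (A p.1) (A k) ^ 2 + dist (A p.2) (A k) ^ 2 - dist (A p.1) (A p.2) ^ 2) /
            (2 * dist (A p.1) (A k) * dist (A p.2) (A k)))
    (x₀ : EuclideanSpace ℝ (Fin N))
    (hmin : ∀ x, ∑ i, B i * dist x₀ (A i) ≤ ∑ i, B i * dist x (A i)) :
    ∀ k, x₀ ≠ A k := by
  classical
  intro k hx
  -- notation
  set S : Finset (Fin (N + 1)) := Finset.univ.erase k with hS
  have hkS : ∀ i ∈ S, i ≠ k := fun i hi => Finset.ne_of_mem_erase hi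
  have ha : ∀ i ∈ S, 0 < dist (A i) (A k) := by
    intro i hi
    refine dist_pos.2 fun hAiAk => hkS i hi (hA.injective hAiAk)
  obtain ⟨v, hv⟩ : ∃ v : EuclideanSpace ℝ (Fin N),
      v = ∑ i ∈ S, (B i / dist (A i) (A k)) • (A i - A k) := ⟨_, rfl⟩
  obtain ⟨g, hg⟩ : ∃ g : Fin (N + 1) × Fin (N + 1) → ℝ,
      g = fun p => (B p.1 / dist (A p.1) (A k)) * ((B p.2 / dist (A p.2) (A k)) *
        (inner ℝ (A p.1 - A k) (A p.2 - A k) : ℝ)) := ⟨_, rfl⟩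
  -- ‖v‖² as a double sum
  have hvv : (inner ℝ v v : ℝ) = ∑ p ∈ S ×ˢ S, g p := by
    rw [hv, sum_inner, Finset.sum_product]
    refine Finset.sum_congr rfl fun i _ => ?_
    rw [inner_sum]
    refine Finset.sum_congr rfl fun j _ => ?_
    rw [real_inner_smul_left, real_inner_smul_right, hg]
  -- symmetry of g
  have hgsym : ∀ p : Fin (N + 1) × Fin (N + 1), g p.swap = g p := by
    intro p
    simp only [hg, Prod.fst_swap, Prod.snd_swap]
    rw [real_inner_comm]
    ring
  -- split the double sum
  have hsplit : ∑ p ∈ S ×ˢ S, g p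
      = ∑ i ∈ S, g (i, i) + 2 * ∑ p ∈ (S ×ˢ S).filter (fun p => p.1 < p.2), g p := by
    rw [← Finset.sum_filter_add_sum_filter_not (S ×ˢ S) (fun p => p.1 < p.2) g]
    have h2 : (S ×ˢ S).filter (fun p => ¬ p.1 < p.2)
        = (S ×ˢ S).filter (fun p => p.2 < p.1) ∪ S.diag := by
      ext p
      simp only [Finset.mem_filter, Finset.mem_union, Finset.mem_product, Finset.mem_diag,
        not_lt]
      constructor
      · rintro ⟨⟨h1, h2⟩, hle⟩
        rcases lt_or_eq_of_le hle with hlt | heq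
        · exact Or.inl ⟨⟨h1, h2⟩, hlt⟩
        · exact Or.inr ⟨h1, heq.symm⟩
      · rintro (⟨⟨h1, h2⟩, hlt⟩ | ⟨h1, heq⟩)
        · exact ⟨⟨h1, h2⟩, le_of_lt hlt⟩
        · exact ⟨⟨h1, heq ▸ h1⟩, le_of_eq heq.symm⟩
    have hdisj : Disjoint ((S ×ˢ S).filter (fun p => p.2 < p.1)) S.diag := by
      rw [Finset.disjoint_left]
      intro p hp hpd
      rw [Finset.mem_filter] at hp
      rw [Finset.mem_diag] at hpd
      exact absurd (hpd.2 ▸ hp.2) (lt_irrefl _)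
    rw [h2, Finset.sum_union hdisj, Finset.sum_diag]
    have hswap : ∑ p ∈ (S ×ˢ S).filter (fun p => p.2 < p.1), g p
        = ∑ p ∈ (S ×ˢ S).filter (fun p => p.1 < p.2), g p := by
      refine Finset.sum_nbij' (fun p => p.swap) (fun p => p.swap) ?_ ?_ ?_ ?_ ?_
      · intro p hp
        simp only [Finset.mem_filter, Finset.mem_product] at hp ⊢
        exact ⟨⟨hp.1.2, hp.1.1⟩, hp.2⟩
      · intro p hp
        simp only [Finset.mem_filter, Finset.mem_product] at hp ⊢
        exact ⟨⟨hp.1.2, hp.1.1⟩, hp.2⟩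
      · intro p _; exact Prod.swap_swap p
      · intro p _; exact Prod.swap_swap p
      · intro p _; exact (hgsym p).symm
    rw [hswap]; ring
  -- diagonal terms
  have hdiag : ∀ i ∈ S, g (i, i) = B i ^ 2 := by
    intro i hi
    have hai := ha i hi
    simp only [hg]
    rw [real_inner_self_eq_norm_sq, ← dist_eq_norm]
    field_simp
  -- off-diagonal terms match the hypothesis
  have hfilter : (S ×ˢ S).filter (fun p => p.1 < p.2)
      = Finset.univ.filter
          (fun p : Fin (N + 1) × Fin (N + 1) => p.1 < p.2 ∧ p.1 ≠ k ∧ p.2 ≠ k) := by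
    ext p
    simp only [Finset.mem_filter, Finset.mem_product, hS, Finset.mem_erase, Finset.mem_univ,
      and_true, true_and]
    tauto
  have hoff : ∀ p ∈ (S ×ˢ S).filter (fun p : Fin (N + 1) × Fin (N + 1) => p.1 < p.2),
      g p = B p.1 * B p.2 *
        (dist (A p.1) (A k) ^ 2 + dist (A p.2) (A k) ^ 2 - dist (A p.1) (A p.2) ^ 2) /
        (2 * dist (A p.1) (A k) * dist (A p.2) (A k)) := by
    intro p hp
    rw [Finset.mem_filter, Finset.mem_product] at hp
    have h1 := ha p.1 hp.1.1
    have h2 := ha p.2 hp.1.2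
    simp only [hg]
    rw [loc_aux (A p.1) (A p.2) (A k)]
    field_simp
  -- the key norm inequality : B k ^ 2 < ‖v‖ ^ 2
  have hnormv : B k ^ 2 < ‖v‖ ^ 2 := by
    have hk := h k
    rw [← hfilter, ← Finset.sum_congr rfl hoff] at hk
    rw [← real_inner_self_eq_norm_sq, hvv, hsplit, Finset.sum_congr rfl hdiag]
    nlinarith [hk]
  have hvpos : 0 < ‖v‖ := by
    by_contra hc
    push_neg at hc
    have : ‖v‖ = 0 := le_antisymm hc (norm_nonneg v)
    rw [this] at hnormv
    nlinarith [hB k]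
  have hBklt : B k < ‖v‖ := by nlinarith [hB k]
  -- set up the perturbation
  obtain ⟨w, hw⟩ : ∃ w : EuclideanSpace ℝ (Fin N), w = ‖v‖⁻¹ • v := ⟨_, rfl⟩
  have hwv : (inner ℝ w v : ℝ) = ‖v‖ := by
    rw [hw, real_inner_smul_left, real_inner_self_eq_norm_sq]
    field_simp
  have hnw : ‖w‖ = 1 := by
    rw [hw, norm_smul, norm_inv, norm_norm, inv_mul_cancel₀ (ne_of_gt hvpos)]
  obtain ⟨C, hC⟩ : ∃ C : ℝ, C = ∑ i ∈ S, B i / (2 * dist (A i) (A k)) := ⟨_, rfl⟩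
  have hSne : S.Nonempty := by
    have : 0 < S.card := by
      rw [hS, Finset.card_erase_of_mem (Finset.mem_univ k), Finset.card_univ, Fintype.card_fin]
      omega
    exact Finset.card_pos.mp this
  have hCpos : 0 < C := by
    rw [hC]
    refine Finset.sum_pos (fun i hi => ?_) hSne
    exact div_pos (hB i) (by linarith [ha i hi])
  obtain ⟨t, ht⟩ : ∃ t : ℝ, t = (‖v‖ - B k) / (2 * C) := ⟨_, rfl⟩
  have htpos : 0 < t := by
    rw [ht]
    exact div_pos (by linarith) (by linarith)
  obtain ⟨x, hxdef⟩ : ∃ x : EuclideanSpace ℝ (Fin N), x = A k + t • w := ⟨_, rfl⟩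
  -- distance from x to A k
  have hdxk : dist x (A k) = t := by
    rw [hxdef, dist_eq_norm, add_sub_cancel_left, norm_smul, hnw, Real.norm_eq_abs,
      abs_of_pos htpos, mul_one]
  -- distance bound for each i in S
  have hkey : ∀ i ∈ S, B i * dist x (A i)
      ≤ B i * dist (A i) (A k) - t * ((B i / dist (A i) (A k)) * (inner ℝ w (A i - A k) : ℝ)) + t ^ 2 * (B i / (2 * dist (A i) (A k)))
      := by
    intro i hi
    have hai := ha i hi
    obtain ⟨e, he⟩ : ∃ e : ℝ, e = (inner ℝ w (A i - A k) : ℝ) := ⟨_, rfl⟩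
    obtain ⟨d, hd⟩ : ∃ d : ℝ, d = dist x (A i) := ⟨_, rfl⟩
    rw [← hd, ← he]
    have hd2 : d ^ 2 = t ^ 2 - 2 * t * e + dist (A i) (A k) ^ 2 := by
      have h1 : dist x (A i) ^ 2 = ‖t • w - (A i - A k)‖ ^ 2 := by
        rw [dist_eq_norm, hxdef]
        have : A k + t • w - A i = t • w - (A i - A k) := by abel
        rw [this]
      have h2 : ‖A i - A k‖ = dist (A i) (A k) := (dist_eq_norm (A i) (A k)).symm
      rw [hd, h1, norm_sub_sq_real, real_inner_smul_left, norm_smul, Real.norm_eq_abs,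
        abs_of_pos htpos, hnw, h2, ← he]
      simp only [mul_one]
      ring
    have hdnn : 0 ≤ d := hd ▸ dist_nonneg
    have h2ad : 2 * dist (A i) (A k) * d ≤ dist (A i) (A k) ^ 2 + d ^ 2 := by nlinarith [sq_nonneg (dist (A i) (A k) - d)]
    have hgoal : d ≤ dist (A i) (A k) - t * e / dist (A i) (A k) + t ^ 2 / (2 * dist (A i) (A k)) := by
      rw [← sub_nonneg]
      have : dist (A i) (A k) - t * e / dist (A i) (A k) + t ^ 2 / (2 * dist (A i) (A k)) - d
          = (dist (A i) (A k) ^ 2 + d ^ 2 - 2 * dist (A i) (A k) * d + (t ^ 2 - 2 * t * e + dist (A i) (A k) ^ 2 - d ^ 2))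
            / (2 * dist (A i) (A k)) := by
        field_simp
        ring
      rw [this]
      apply div_nonneg _ (by linarith)
      nlinarith [sq_nonneg (dist (A i) (A k) - d), hd2]
    have hBi := (hB i).le
    calc B i * d ≤ B i * (dist (A i) (A k) - t * e / dist (A i) (A k) + t ^ 2 / (2 * dist (A i) (A k))) := by
          exact mul_le_mul_of_nonneg_left hgoal hBi
      _ = B i * dist (A i) (A k) - t * ((B i / dist (A i) (A k)) * e) + t ^ 2 * (B i / (2 * dist (A i) (A k))) := by
          field_simp
  -- sum of inner products
  have hsum_inner : ∑ i ∈ S, (B i / dist (A i) (A k)) * (inner ℝ w (A i - A k) : ℝ) = ‖v‖ := by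
    rw [← hwv, hv, inner_sum]
    refine Finset.sum_congr rfl fun i _ => ?_
    rw [real_inner_smul_right]
  -- sum the bounds
  have hsum_bound : ∑ i ∈ S, B i * dist x (A i)
      ≤ ∑ i ∈ S, B i * dist (A i) (A k) - t * ‖v‖ + t ^ 2 * C := by
    calc ∑ i ∈ S, B i * dist x (A i)
        ≤ ∑ i ∈ S, (B i * dist (A i) (A k) - t * ((B i / dist (A i) (A k)) * (inner ℝ w (A i - A k) : ℝ))
            + t ^ 2 * (B i / (2 * dist (A i) (A k)))) := Finset.sum_le_sum hkey
      _ = ∑ i ∈ S, B i * dist (A i) (A k) - t * ∑ i ∈ S, (B i / dist (A i) (A k)) * (inner ℝ w (A i - A k) : ℝ)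
            + t ^ 2 * C := by
          rw [hC, Finset.mul_sum, Finset.mul_sum, ← Finset.sum_sub_distrib,
            ← Finset.sum_add_distrib]
      _ = ∑ i ∈ S, B i * dist (A i) (A k) - t * ‖v‖ + t ^ 2 * C := by rw [hsum_inner]
  -- put everything together with minimality
  have hmin' := hmin x
  rw [hx] at hmin'
  have hLHS : ∑ i, B i * dist (A k) (A i) = ∑ i ∈ S, B i * dist (A i) (A k) := by
    rw [← Finset.add_sum_erase Finset.univ _ (Finset.mem_univ k), dist_self, mul_zero, zero_add]
    exact Finset.sum_congr rfl fun i _ => by rw [dist_comm]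
  have hRHS : ∑ i, B i * dist x (A i) = B k * t + ∑ i ∈ S, B i * dist x (A i) := by
    rw [← Finset.add_sum_erase Finset.univ _ (Finset.mem_univ k), hdxk]
  rw [hLHS, hRHS] at hmin'
  have htC : t * C = (‖v‖ - B k) / 2 := by
    rw [ht]
    field_simp
  have ht2C : t ^ 2 * C = t * (‖v‖ - B k) / 2 := by
    have : t ^ 2 * C = t * (t * C) := by ring
    rw [this, htC]
    ring
  have hprod : 0 < t * (‖v‖ - B k) := mul_pos htpos (by linarith)
  nlinarith [hmin', hsum_bound, hprod, ht2C]
end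

section
/- Let N ≥ 2 and let A_1, …, A_{N+1} be affinely independent points in the Euclidean space ℝ^N, with positive weights B_1, …, B_{N+1}, and write a_{ij} = dist(A_i, A_j). If there exists an index k ∈ {1, …, N+1} such that Σ_{i<j, i≠k, j≠k} B_i·B_j·(a_{ik}² + a_{jk}² − a_{ij}²)/(2·a_{ik}·a_{jk}) ≤ (B_k² − Σ_{i≠k} B_i²)/2, then the vertex A_k is a minimizer of the weighted Fermat objective f(x) = Σ_{i=1}^{N+1} B_i·dist(x, A_i), i.e., f(A_k) ≤ f(x) for all x ∈ ℝ^N (the weighted Fermat–Torricelli point is absorbed at the vertex A_k). -/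
open Finset
open scoped RealInnerProductSpace

/-- **Weighted Fermat–Fréchet solution, absorbed case.**
If for some vertex index `k` the inequality
`∑_{i<j, i≠k, j≠k} B i * B j * (a_ik² + a_jk² − a_ij²)/(2 a_ik a_jk)
  ≤ (B k² − ∑_{i≠k} B i²)/2`
holds, then the vertex `A k` minimizes the weighted Fermat objective. -/
theorem weighted_fermat_absorbed
    (N : ℕ) (hN : 2 ≤ N)
    (A : Fin (N + 1) → EuclideanSpace ℝ (Fin N))
    (hA : AffineIndependent ℝ A)
    (B : Fin (N + 1) → ℝ) (hB : ∀ i, 0 < B i)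
    (k : Fin (N + 1))
    (h : ∑ p ∈ Finset.univ.filter
          (fun p : Fin (N + 1) × Fin (N + 1) => p.1 < p.2 ∧ p.1 ≠ k ∧ p.2 ≠ k),
        B p.1 * B p.2 *
          (dist (A p.1) (A k) ^ 2 + dist (A p.2) (A k) ^ 2 - dist (A p.1) (A p.2) ^ 2) /
          (2 * dist (A p.1) (A k) * dist (A p.2) (A k)) ≤
        (B k ^ 2 - ∑ i ∈ Finset.univ.erase k, B i ^ 2) / 2) :
    ∀ x, ∑ i, B i * dist (A k) (A i) ≤ ∑ i, B i * dist x (A i) := by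
  classical
  have hAinj : Function.Injective A := hA.injective
  set s : Finset (Fin (N + 1)) := Finset.univ.erase k with hs
  have hmem : ∀ i, i ∈ s ↔ i ≠ k := by intro i; simp [hs]
  have hd : ∀ i, i ≠ k → (0:ℝ) < dist (A i) (A k) := fun i hi =>
    dist_pos.mpr fun h' => hi (hAinj h')
  set v : Fin (N + 1) → EuclideanSpace ℝ (Fin N) :=
    fun i => (dist (A i) (A k))⁻¹ • (A k - A i) with hv
  have hnormAk : ∀ i, ‖A k - A i‖ = dist (A i) (A k) := by
    intro i; rw [dist_comm, dist_eq_norm]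
  have hvnorm : ∀ i, i ≠ k → ‖v i‖ = 1 := by
    intro i hi
    have di := hd i hi
    simp only [hv, norm_smul, Real.norm_eq_abs, abs_of_pos (inv_pos.mpr di), hnormAk]
    field_simp
  have hinner : ∀ i, i ≠ k → ∀ j, j ≠ k → ⟪v i, v j⟫ =
      (dist (A i) (A k) ^ 2 + dist (A j) (A k) ^ 2 - dist (A i) (A j) ^ 2) /
        (2 * dist (A i) (A k) * dist (A j) (A k)) := by
    intro i hi j hj
    have di : dist (A i) (A k) ≠ 0 := ne_of_gt (hd i hi)
    have dj : dist (A j) (A k) ≠ 0 := ne_of_gt (hd j hj)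
    have h1 : ⟪A k - A i, A k - A j⟫ =
        (dist (A i) (A k) ^ 2 + dist (A j) (A k) ^ 2 - dist (A i) (A j) ^ 2) / 2 := by
      have h2 := norm_sub_sq_real (A k - A i) (A k - A j)
      have h3 : (A k - A i) - (A k - A j) = A j - A i := by abel
      rw [h3] at h2
      have e3 : ‖A j - A i‖ = dist (A i) (A j) := by rw [dist_comm, dist_eq_norm]
      rw [hnormAk i, hnormAk j, e3] at h2
      linarith
    simp only [hv, real_inner_smul_left, real_inner_smul_right, h1]
    field_simp
  set w : EuclideanSpace ℝ (Fin N) := ∑ i ∈ s, B i • v i with hw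
  -- compute ‖w‖²
  set T : Finset (Fin (N + 1) × Fin (N + 1)) := Finset.univ.filter
      (fun p : Fin (N + 1) × Fin (N + 1) => p.1 < p.2 ∧ p.1 ≠ k ∧ p.2 ≠ k) with hT
  set F : Fin (N + 1) × Fin (N + 1) → ℝ := fun p => B p.1 * B p.2 * ⟪v p.1, v p.2⟫ with hF
  have hFsymm : ∀ p : Fin (N + 1) × Fin (N + 1), F p.swap = F p := by
    intro p; simp only [hF, Prod.fst_swap, Prod.snd_swap, real_inner_comm]; ring
  have hww : ⟪w, w⟫ = ∑ p ∈ s ×ˢ s, F p := by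
    rw [hw, sum_inner]
    rw [Finset.sum_product (f := fun p => F p)]
    refine Finset.sum_congr rfl fun i hi => ?_
    rw [inner_sum]
    refine Finset.sum_congr rfl fun j hj => ?_
    rw [real_inner_smul_left, real_inner_smul_right]
    simp only [hF]; ring
  have hsplit : ∑ p ∈ s ×ˢ s, F p = ∑ p ∈ s.diag, F p + ∑ p ∈ s.offDiag, F p := by
    rw [← Finset.diag_union_offDiag s, Finset.sum_union (Finset.disjoint_diag_offDiag s)]
  have hdiag : ∑ p ∈ s.diag, F p = ∑ i ∈ s, B i ^ 2 := by
    rw [Finset.sum_diag]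
    refine Finset.sum_congr rfl fun i hi => ?_
    have : ⟪v i, v i⟫ = 1 := by
      rw [real_inner_self_eq_norm_sq, hvnorm i ((hmem i).mp hi), one_pow]
    simp only [hF, this]; ring
  have hTeq : s.offDiag.filter (fun p => p.1 < p.2) = T := by
    ext p
    simp only [Finset.mem_filter, Finset.mem_offDiag, hT, Finset.mem_univ, true_and, hmem]
    constructor
    · rintro ⟨⟨h1, h2, _⟩, h4⟩; exact ⟨h4, h1, h2⟩
    · rintro ⟨h4, h1, h2⟩; exact ⟨⟨h1, h2, ne_of_lt h4⟩, h4⟩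
  have hswap : ∑ p ∈ s.offDiag.filter (fun p => ¬ p.1 < p.2), F p
      = ∑ p ∈ s.offDiag.filter (fun p => p.1 < p.2), F p := by
    refine Finset.sum_nbij' (i := Prod.swap) (j := Prod.swap) ?_ ?_ ?_ ?_ ?_
    · intro p hp
      simp only [Finset.mem_filter, Finset.mem_offDiag] at hp ⊢
      obtain ⟨⟨h1, h2, h3⟩, h4⟩ := hp
      exact ⟨⟨h2, h1, Ne.symm h3⟩, lt_of_le_of_ne (not_lt.mp h4) (Ne.symm h3)⟩
    · intro p hp
      simp only [Finset.mem_filter, Finset.mem_offDiag] at hp ⊢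
      obtain ⟨⟨h1, h2, h3⟩, h4⟩ := hp
      exact ⟨⟨h2, h1, Ne.symm h3⟩, not_lt.mpr (le_of_lt h4)⟩
    · intro p _; exact Prod.swap_swap p
    · intro p _; exact Prod.swap_swap p
    · intro p _; exact (hFsymm p).symm
  have hoff : ∑ p ∈ s.offDiag, F p = 2 * ∑ p ∈ T, F p := by
    rw [← Finset.sum_filter_add_sum_filter_not s.offDiag (fun p => p.1 < p.2) F,
      hswap, hTeq]
    ring
  have hTsum : ∑ p ∈ T, F p = ∑ p ∈ T,
      B p.1 * B p.2 *
        (dist (A p.1) (A k) ^ 2 + dist (A p.2) (A k) ^ 2 - dist (A p.1) (A p.2) ^ 2) /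
        (2 * dist (A p.1) (A k) * dist (A p.2) (A k)) := by
    refine Finset.sum_congr rfl fun p hp => ?_
    simp only [hT, Finset.mem_filter] at hp
    simp only [hF, hinner p.1 hp.2.2.1 p.2 hp.2.2.2]
    rw [mul_div_assoc]
  have hW2 : ‖w‖ ^ 2 ≤ B k ^ 2 := by
    have e : ‖w‖ ^ 2 = ∑ i ∈ s, B i ^ 2 + 2 * ∑ p ∈ T, F p := by
      rw [← real_inner_self_eq_norm_sq, hww, hsplit, hdiag, hoff]
    rw [e, hTsum]
    linarith [h]
  have hwle : ‖w‖ ≤ B k :=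
    (pow_le_pow_iff_left₀ (norm_nonneg w) (hB k).le two_ne_zero).mp hW2
  -- main inequality
  intro x
  have key : ∀ i, i ≠ k → B i * dist (A k) (A i) + B i * ⟪v i, x - A k⟫ ≤ B i * dist x (A i) := by
    intro i hi
    have di := hd i hi
    have h1 : ⟪v i, x - A i⟫ ≤ dist x (A i) := by
      calc ⟪v i, x - A i⟫ ≤ ‖v i‖ * ‖x - A i‖ := real_inner_le_norm _ _
        _ = dist x (A i) := by rw [hvnorm i hi, one_mul, dist_eq_norm]
    have h2 : ⟪v i, x - A i⟫ = ⟪v i, x - A k⟫ + dist (A k) (A i) := by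
      have e : x - A i = (x - A k) + (A k - A i) := by abel
      rw [e, inner_add_right]
      congr 1
      simp only [hv, real_inner_smul_left, real_inner_self_eq_norm_sq, hnormAk i]
      rw [dist_comm (A k) (A i)]
      field_simp
    rw [h2] at h1
    have h3 := mul_le_mul_of_nonneg_left h1 (hB i).le
    rw [mul_add] at h3
    linarith
  have hsum1 : ∑ i ∈ s, (B i * dist (A k) (A i) + B i * ⟪v i, x - A k⟫)
      ≤ ∑ i ∈ s, B i * dist x (A i) :=
    Finset.sum_le_sum fun i hi => key i ((hmem i).mp hi)
  have hwinner : ⟪w, x - A k⟫ = ∑ i ∈ s, B i * ⟪v i, x - A k⟫ := by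
    rw [hw, sum_inner]
    exact Finset.sum_congr rfl fun i _ => real_inner_smul_left _ _ _
  have hK : 0 ≤ B k * dist x (A k) + ⟪w, x - A k⟫ := by
    have h1 : |⟪w, x - A k⟫| ≤ ‖w‖ * ‖x - A k‖ := abs_real_inner_le_norm _ _
    have h2 : ‖w‖ * ‖x - A k‖ ≤ B k * ‖x - A k‖ :=
      mul_le_mul_of_nonneg_right hwle (norm_nonneg _)
    have h3 : dist x (A k) = ‖x - A k‖ := dist_eq_norm _ _
    rw [← h3] at h1 h2
    have h4 := neg_abs_le ⟪w, x - A k⟫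
    linarith
  have hsum_eq_k : ∑ i, B i * dist (A k) (A i) = ∑ i ∈ s, B i * dist (A k) (A i) := by
    rw [← Finset.add_sum_erase _ _ (Finset.mem_univ k), dist_self, mul_zero, zero_add]
  have hsum_x : ∑ i, B i * dist x (A i)
      = B k * dist x (A k) + ∑ i ∈ s, B i * dist x (A i) :=
    (Finset.add_sum_erase _ _ (Finset.mem_univ k)).symm
  have expand : ∑ i ∈ s, (B i * dist (A k) (A i) + B i * ⟪v i, x - A k⟫)
      = ∑ i ∈ s, B i * dist (A k) (A i) + ⟪w, x - A k⟫ := by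
    rw [Finset.sum_add_distrib, hwinner]
  rw [hsum_eq_k, hsum_x]
  rw [expand] at hsum1
  linarith
end

section
/- Let N ≥ 2 and let A_1, …, A_{N+1} be affinely independent points in the Euclidean space ℝ^N, with positive weights B_1, …, B_{N+1}. Then there exists a unique point x₀ ∈ ℝ^N minimizing the weighted Fermat objective f(x) = Σ_{i=1}^{N+1} B_i·dist(x, A_i); that is, the weighted Fermat–Torricelli point of the simplex exists and is unique. -/
/-!
The objective `f x = ∑ i, B i * dist x (A i)` is continuous and grows at least like
`B i * dist x (A i)`, so it attains its minimum. It is convex, and in a strictly convex space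
`dist (midpoint x y) a = (dist x a + dist y a) / 2` forces `x - a` and `y - a` onto a common ray.
Hence if two distinct points `x ≠ y` both minimize `f`, equality holds term by term at their
midpoint and every `A i` lies on the line through `x` and `y`; but `N + 1 ≥ 3` affinely
independent points are never collinear.
-/

open Filter Finset

theorem mem_affineSpan_pair_of_sameRay_vsub {R V P : Type*} [Field R] [LinearOrder R]
    [IsStrictOrderedRing R] [AddCommGroup V] [Module R V] [AddTorsor V P] {x y a : P}
    (hxy : x ≠ y) (h : SameRay R (x -ᵥ a) (y -ᵥ a)) : a ∈ line[R, x, y] := by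
  have hcol : Collinear R ({a, x, y} : Set P) := by
    rcases wbtw_total_of_sameRay_vsub_left h with h | h
    · exact h.collinear
    · rw [Set.pair_comm]; exact h.collinear
  exact hcol.mem_affineSpan_of_mem_of_ne (by simp) (by simp) (by simp) hxy

theorem collinear_of_subset_affineSpan_pair {k V P : Type*} [Field k] [AddCommGroup V]
    [Module k V] [AddTorsor V P] {s : Set P} {p₁ p₂ : P} (h : s ⊆ line[k, p₁, p₂]) :
    Collinear k s := by
  rw [collinear_iff_exists_forall_eq_smul_vadd]
  refine ⟨p₁, p₂ -ᵥ p₁, fun p hp => ?_⟩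
  obtain ⟨r, rfl⟩ := mem_affineSpan_pair_iff_exists_lineMap_eq.1 (h hp)
  exact ⟨r, AffineMap.lineMap_apply _ _ _⟩

theorem AffineIndependent.not_collinear_range {k V P ι : Type*} [Field k] [AddCommGroup V]
    [Module k V] [AddTorsor V P] [Fintype ι] {p : ι → P} (hp : AffineIndependent k p)
    (hι : 3 ≤ Fintype.card ι) : ¬Collinear k (Set.range p) := by
  intro hcol
  have hrank := hp.finrank_vectorSpan (n := Fintype.card ι - 1) (by omega)
  have := hcol.finrank_le_one
  omega

theorem sameRay_sub_of_dist_midpoint_eq {E : Type*} [NormedAddCommGroup E] [NormedSpace ℝ E]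
    [StrictConvexSpace ℝ E] {x y a : E}
    (h : dist (midpoint ℝ x y) a = (dist x a + dist y a) / 2) : SameRay ℝ (x - a) (y - a) := by
  have hmid : midpoint ℝ x y - a = (2⁻¹ : ℝ) • ((x - a) + (y - a)) := by
    rw [midpoint_eq_smul_add, invOf_eq_inv]; module
  rw [dist_eq_norm, hmid, norm_smul, dist_eq_norm, dist_eq_norm] at h
  rw [sameRay_iff_norm_add]
  norm_num at h
  linarith

noncomputable section

variable {ι : Type*} [Fintype ι]

def fermatObjective {α : Type*} [PseudoMetricSpace α] (B : ι → ℝ) (A : ι → α) (x : α) : ℝ :=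
  ∑ i, B i * dist x (A i)

section Metric

variable {α : Type*} [PseudoMetricSpace α] {B : ι → ℝ} {A : ι → α}

theorem continuous_fermatObjective : Continuous (fermatObjective B A) := by
  unfold fermatObjective; fun_prop

theorem tendsto_fermatObjective_cocompact [ProperSpace α] (hB : ∀ i, 0 ≤ B i) {i₀ : ι}
    (hi₀ : 0 < B i₀) : Tendsto (fermatObjective B A) (cocompact α) atTop := by
  refine tendsto_atTop_mono (fun x => ?_)
    ((tendsto_dist_right_cocompact_atTop (A i₀)).const_mul_atTop hi₀)
  exact single_le_sum (f := fun i => B i * dist x (A i))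
    (fun i _ => mul_nonneg (hB i) dist_nonneg) (mem_univ i₀)

theorem exists_forall_fermatObjective_le [ProperSpace α] [Nonempty ι] (hB : ∀ i, 0 < B i) :
    ∃ x, ∀ y, fermatObjective B A x ≤ fermatObjective B A y :=
  have : Nonempty α := ⟨A (Classical.arbitrary ι)⟩
  continuous_fermatObjective.exists_forall_le
    (tendsto_fermatObjective_cocompact (fun i => (hB i).le) (hB (Classical.arbitrary ι)))

end Metric

theorem collinear_range_of_fermatObjective_minimizers {E : Type*} [NormedAddCommGroup E]
    [NormedSpace ℝ E] [StrictConvexSpace ℝ E] {B : ι → ℝ} {A : ι → E} (hB : ∀ i, 0 < B i)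
    {x y : E} (hxy : x ≠ y) (hx : ∀ z, fermatObjective B A x ≤ fermatObjective B A z)
    (hy : ∀ z, fermatObjective B A y ≤ fermatObjective B A z) :
    Collinear ℝ (Set.range A) := by
  set m := midpoint ℝ x y
  have hterm : ∀ i ∈ univ, B i * dist m (A i) ≤ B i * ((dist x (A i) + dist y (A i)) / 2) :=
    fun i _ => mul_le_mul_of_nonneg_left
      (by simpa using dist_midpoint_midpoint_le x y (A i) (A i)) (hB i).le
  have havg : ∑ i, B i * ((dist x (A i) + dist y (A i)) / 2) =
      (fermatObjective B A x + fermatObjective B A y) / 2 := by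
    simp only [fermatObjective, mul_add, add_div, sum_add_distrib, sum_div, mul_div_assoc]
  have hsum : fermatObjective B A m = ∑ i, B i * ((dist x (A i) + dist y (A i)) / 2) := by
    have hm_le : fermatObjective B A m ≤ ∑ i, B i * ((dist x (A i) + dist y (A i)) / 2) :=
      sum_le_sum hterm
    linarith [hx m, hx y, hy x]
  have hdist : ∀ i, dist m (A i) = (dist x (A i) + dist y (A i)) / 2 := fun i =>
    mul_left_cancel₀ (hB i).ne' ((sum_eq_sum_iff_of_le hterm).1 hsum i (mem_univ i))
  refine collinear_of_subset_affineSpan_pair (p₁ := x) (p₂ := y) ?_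
  rintro _ ⟨i, rfl⟩
  exact mem_affineSpan_pair_of_sameRay_vsub hxy (sameRay_sub_of_dist_midpoint_eq (hdist i))

end

/-- **Existence and uniqueness of the weighted Fermat–Torricelli point** of a
nondegenerate simplex in `ℝ^N`: there is a unique point minimizing the weighted
Fermat objective `f x = ∑ i, B i * dist x (A i)`. -/
theorem weighted_fermat_exists_unique
    (N : ℕ) (hN : 2 ≤ N)
    (A : Fin (N + 1) → EuclideanSpace ℝ (Fin N))
    (hA : AffineIndependent ℝ A)
    (B : Fin (N + 1) → ℝ) (hB : ∀ i, 0 < B i) :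
    ∃! x₀ : EuclideanSpace ℝ (Fin N),
      ∀ x, ∑ i, B i * dist x₀ (A i) ≤ ∑ i, B i * dist x (A i) := by
  obtain ⟨x₀, hx₀⟩ := exists_forall_fermatObjective_le (A := A) hB
  refine ⟨x₀, hx₀, fun y hy => ?_⟩
  by_contra hne
  exact hA.not_collinear_range (by simp only [Fintype.card_fin]; omega)
    (collinear_range_of_fermatObjective_minimizers hB hne hy hx₀)
end

section
/- Let A_1, …, A_n (n ≥ 2) be pairwise distinct points in a Euclidean space ℝ^d with positive weights B_1, …, B_n, and fix k ∈ {1, …, n}. Then the vertex A_k is a minimizer of the weighted Fermat objective f(x) = Σ_{i=1}^n B_i·dist(x, A_i) if and only if ‖Σ_{i≠k} B_i·(A_i − A_k)/‖A_i − A_k‖‖ ≤ B_k. -/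
open Finset

private lemma step_bound {E : Type*} [NormedAddCommGroup E] [InnerProductSpace ℝ E]
    (a w : E) (t : ℝ) (hc0 : 0 < ‖a‖) (hw : ‖w‖ = 1) (ht : 0 ≤ t) :
    ‖t • w - a‖ ≤ ‖a‖ - t * (inner ℝ w a : ℝ) / ‖a‖ + t ^ 2 / (2 * ‖a‖) := by
  set c := ‖a‖
  set α : ℝ := inner ℝ w a with hα
  have hαc : α ≤ c := by
    calc α ≤ ‖w‖ * ‖a‖ := real_inner_le_norm w a
    _ = c := by rw [hw]; ring
  have hαc' : -c ≤ α := by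
    have := real_inner_le_norm w (-a)
    have h2 : (inner ℝ w (-a) : ℝ) = -α := by rw [inner_neg_right, hα]
    rw [h2, norm_neg] at this
    nlinarith [this]
  have hL2 : ‖t • w - a‖ ^ 2 = t ^ 2 - 2 * (t * α) + c ^ 2 := by
    rw [norm_sub_sq_real, norm_smul, real_inner_smul_left]
    simp [hw, abs_of_nonneg ht]
    try ring
  have hL0 : (0:ℝ) ≤ ‖t • w - a‖ := norm_nonneg _
  have hgoal : ‖t • w - a‖ ≤ (2 * c ^ 2 - 2 * (t * α) + t ^ 2) / (2 * c) := by
    rw [le_div_iff₀ (by positivity)]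
    nlinarith [sq_nonneg (t * (t - 2 * α)), sq_nonneg (c - t), hL2, hL0,
      mul_nonneg ht (sub_nonneg.2 hαc)]
  calc ‖t • w - a‖ ≤ (2 * c ^ 2 - 2 * (t * α) + t ^ 2) / (2 * c) := hgoal
  _ = c - t * α / c + t ^ 2 / (2 * c) := by field_simp

/-- **Sturm–Kupitz–Martini characterization of absorbed weighted Fermat–Torricelli
points.** The vertex `A k` minimizes the weighted Fermat objective iff the norm of
the weighted sum of unit vectors from `A k` toward the other vertices is at most `B k`. -/
theorem weighted_fermat_vertex_iff
    (n d : ℕ) (hn : 2 ≤ n)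
    (A : Fin n → EuclideanSpace ℝ (Fin d))
    (hA : ∀ i j, i ≠ j → A i ≠ A j)
    (B : Fin n → ℝ) (hB : ∀ i, 0 < B i)
    (k : Fin n) :
    (∀ x, ∑ i, B i * dist (A k) (A i) ≤ ∑ i, B i * dist x (A i)) ↔
      ‖∑ i ∈ Finset.univ.erase k, (B i / ‖A i - A k‖) • (A i - A k)‖ ≤ B k := by
  set v : EuclideanSpace ℝ (Fin d) :=
    ∑ i ∈ Finset.univ.erase k, (B i / ‖A i - A k‖) • (A i - A k) with hvdef
  have hc0 : ∀ i ∈ Finset.univ.erase k, (0:ℝ) < ‖A i - A k‖ := by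
    intro i hi
    have : A i ≠ A k := hA i k (Finset.ne_of_mem_erase hi)
    simpa [sub_eq_zero] using norm_pos_iff.2 (sub_ne_zero.2 this)
  -- f(A k) splits
  have hfk : ∑ i, B i * dist (A k) (A i)
      = ∑ i ∈ Finset.univ.erase k, B i * ‖A i - A k‖ := by
    rw [← Finset.add_sum_erase _ _ (Finset.mem_univ k)]
    simp [dist_eq_norm, norm_sub_rev]
  have hfx : ∀ x, ∑ i, B i * dist x (A i)
      = B k * ‖x - A k‖ + ∑ i ∈ Finset.univ.erase k, B i * ‖x - A i‖ := by
    intro x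
    rw [← Finset.add_sum_erase _ _ (Finset.mem_univ k)]
    simp [dist_eq_norm]
  constructor
  · -- minimality implies ‖v‖ ≤ B k
    intro hmin
    by_contra hlt
    push_neg at hlt
    have hv0 : 0 < ‖v‖ := lt_trans (hB k) hlt
    set w : EuclideanSpace ℝ (Fin d) := ‖v‖⁻¹ • v with hwdef
    have hw1 : ‖w‖ = 1 := by
      rw [hwdef, norm_smul, norm_inv, norm_norm]
      field_simp
    have hwv : (inner ℝ w v : ℝ) = ‖v‖ := by
      rw [hwdef, real_inner_smul_left, real_inner_self_eq_norm_sq]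
      field_simp
    -- total second-order coefficient
    set C : ℝ := ∑ i ∈ Finset.univ.erase k, B i / (2 * ‖A i - A k‖) with hCdef
    have hC0 : 0 ≤ C := Finset.sum_nonneg fun i hi =>
      le_of_lt (div_pos (hB i) (by linarith [hc0 i hi]))
    set t : ℝ := (‖v‖ - B k) / (2 * (C + 1)) with htdef
    have ht0 : 0 < t := div_pos (by linarith) (by linarith)
    have htC : t * C < ‖v‖ - B k := by
      rw [htdef]
      rw [div_mul_eq_mul_div, div_lt_iff₀ (by linarith)]
      nlinarith
    -- evaluate f at x := A k + t • w
    set x : EuclideanSpace ℝ (Fin d) := A k + t • w with hxdef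
    have hterm : ∀ i ∈ Finset.univ.erase k,
        B i * ‖x - A i‖ ≤ B i * ‖A i - A k‖
          - t * ((B i / ‖A i - A k‖) * (inner ℝ w (A i - A k) : ℝ))
          + t ^ 2 * (B i / (2 * ‖A i - A k‖)) := by
      intro i hi
      have hci := hc0 i hi
      have hxi : x - A i = t • w - (A i - A k) := by
        rw [hxdef]; abel
      have := step_bound (A i - A k) w t hci hw1 ht0.le
      rw [hxi]
      have hBi := (hB i).le
      calc B i * ‖t • w - (A i - A k)‖
          ≤ B i * (‖A i - A k‖ - t * (inner ℝ w (A i - A k) : ℝ) / ‖A i - A k‖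
              + t ^ 2 / (2 * ‖A i - A k‖)) := by
            exact mul_le_mul_of_nonneg_left this hBi
        _ = B i * ‖A i - A k‖
            - t * ((B i / ‖A i - A k‖) * (inner ℝ w (A i - A k) : ℝ))
            + t ^ 2 * (B i / (2 * ‖A i - A k‖)) := by
            field_simp
    have hsum : ∑ i ∈ Finset.univ.erase k, B i * ‖x - A i‖
        ≤ ∑ i ∈ Finset.univ.erase k, B i * ‖A i - A k‖ - t * ‖v‖ + t ^ 2 * C := by
      have h1 := Finset.sum_le_sum hterm
      have h2 : ∑ i ∈ Finset.univ.erase k,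
          (B i * ‖A i - A k‖
            - t * ((B i / ‖A i - A k‖) * (inner ℝ w (A i - A k) : ℝ))
            + t ^ 2 * (B i / (2 * ‖A i - A k‖)))
          = ∑ i ∈ Finset.univ.erase k, B i * ‖A i - A k‖ - t * ‖v‖ + t ^ 2 * C := by
        rw [Finset.sum_add_distrib, Finset.sum_sub_distrib, ← Finset.mul_sum,
          ← Finset.mul_sum, hCdef]
        congr 2
        rw [← hwv, hvdef, inner_sum]
        congr 1
        exact Finset.sum_congr rfl fun i _ =>
          (real_inner_smul_right w (A i - A k) (B i / ‖A i - A k‖)).symm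
      linarith [h1, h2.le, h2.ge]
    have hxk : ‖x - A k‖ = t := by
      rw [hxdef]
      simp [norm_smul, abs_of_nonneg ht0.le, hw1]
    have hfinal : ∑ i, B i * dist x (A i) < ∑ i, B i * dist (A k) (A i) := by
      rw [hfx x, hfk, hxk]
      nlinarith [hsum, htC, ht0]
    exact absurd (hmin x) (not_le.2 hfinal)
  · -- ‖v‖ ≤ B k implies minimality
    intro hv x
    rw [hfk, hfx x]
    set y : EuclideanSpace ℝ (Fin d) := x - A k with hydef
    have hterm : ∀ i ∈ Finset.univ.erase k,
        B i * ‖A i - A k‖ - (B i / ‖A i - A k‖) * (inner ℝ y (A i - A k) : ℝ)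
          ≤ B i * ‖x - A i‖ := by
      intro i hi
      have hci := hc0 i hi
      have hxi : ‖x - A i‖ = ‖(A i - A k) - y‖ := by
        rw [hydef, norm_sub_rev]
        congr 1
        abel
      have hCS : (inner ℝ (A i - A k) ((A i - A k) - y) : ℝ)
          ≤ ‖A i - A k‖ * ‖(A i - A k) - y‖ := real_inner_le_norm _ _
      have hin : (inner ℝ (A i - A k) ((A i - A k) - y) : ℝ)
          = ‖A i - A k‖ ^ 2 - (inner ℝ y (A i - A k) : ℝ) := by
        rw [inner_sub_right, real_inner_self_eq_norm_sq, real_inner_comm]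
      rw [hin] at hCS
      have hmul := mul_le_mul_of_nonneg_left hCS (le_of_lt (div_pos (hB i) hci))
      have hcne : ‖A i - A k‖ ≠ 0 := ne_of_gt hci
      have e1 : B i / ‖A i - A k‖ * (‖A i - A k‖ ^ 2 - (inner ℝ y (A i - A k) : ℝ))
          = B i * ‖A i - A k‖ - B i / ‖A i - A k‖ * (inner ℝ y (A i - A k) : ℝ) := by
        field_simp
      have e2 : B i / ‖A i - A k‖ * (‖A i - A k‖ * ‖(A i - A k) - y‖)
          = B i * ‖(A i - A k) - y‖ := by
        field_simp
      rw [e1, e2] at hmul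
      rw [hxi]
      exact hmul
    have hsum := Finset.sum_le_sum hterm
    have hleft : ∑ i ∈ Finset.univ.erase k,
        (B i * ‖A i - A k‖ - B i / ‖A i - A k‖ * (inner ℝ y (A i - A k) : ℝ))
        = ∑ i ∈ Finset.univ.erase k, B i * ‖A i - A k‖ - (inner ℝ y v : ℝ) := by
      rw [Finset.sum_sub_distrib]
      congr 1
      rw [hvdef, inner_sum]
      exact Finset.sum_congr rfl fun i _ =>
          (real_inner_smul_right y (A i - A k) (B i / ‖A i - A k‖)).symm
    have hCSy : (inner ℝ y v : ℝ) ≤ ‖y‖ * ‖v‖ := real_inner_le_norm _ _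
    have hyB : ‖y‖ * ‖v‖ ≤ ‖y‖ * B k := mul_le_mul_of_nonneg_left hv (norm_nonneg y)
    rw [hleft] at hsum
    have hyx : ‖x - A k‖ = ‖y‖ := by rw [hydef]
    rw [hyx]
    linarith [hsum, hCSy, hyB]
end

section
/- Let A_1, …, A_n (n ≥ 2) be pairwise distinct points in a Euclidean space ℝ^d with positive weights B_1, …, B_n, and let A_0 be a point with A_0 ∉ {A_1, …, A_n}. Then A_0 is a minimizer of the weighted Fermat objective f(x) = Σ_{i=1}^n B_i·dist(x, A_i) if and only if Σ_{i=1}^n B_i·(A_i − A_0)/‖A_i − A_0‖ = 0 (the weighted sum of the unit vectors from A_0 toward the vertices vanishes). -/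
open Finset

lemma dist_hasFDerivAt' {d : ℕ} (a A₀ : EuclideanSpace ℝ (Fin d)) (h : A₀ ≠ a) :
    HasFDerivAt (fun x => dist x a) (‖A₀ - a‖⁻¹ • innerSL ℝ (A₀ - a)) A₀ := by
  have hne : A₀ - a ≠ 0 := sub_ne_zero.2 h
  have hn : ‖A₀ - a‖ ≠ 0 := norm_ne_zero_iff.2 hne
  have h1 : HasFDerivAt (fun x : EuclideanSpace ℝ (Fin d) => ‖x - a‖ ^ 2)
      (2 • (innerSL ℝ (A₀ - a))) A₀ := by
    have := ((hasFDerivAt_id A₀).sub_const a).norm_sq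
    simpa using this
  have hsq : (‖A₀ - a‖ ^ 2 : ℝ) ≠ 0 := pow_ne_zero _ hn
  have h2 := (Real.hasDerivAt_sqrt hsq).comp_hasFDerivAt A₀ h1
  have heq : (fun x : EuclideanSpace ℝ (Fin d) => Real.sqrt (‖x - a‖ ^ 2)) =
      fun x => dist x a := by
    funext x
    rw [Real.sqrt_sq (norm_nonneg _), dist_eq_norm]
  simp only [Function.comp_def] at h2
  rw [heq] at h2
  refine h2.congr_fderiv (Eq.symm ?_)
  rw [Real.sqrt_sq (norm_nonneg _)]
  ext w
  simp [smul_smul]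
  ring

/-- **Balancing characterization of floating weighted Fermat–Torricelli points.**
A point `A₀` not among the given points minimizes the weighted Fermat objective
iff the weighted sum of the unit vectors from `A₀` toward the vertices vanishes. -/
theorem weighted_fermat_floating_iff
    (n d : ℕ) (hn : 2 ≤ n)
    (A : Fin n → EuclideanSpace ℝ (Fin d))
    (hA : ∀ i j, i ≠ j → A i ≠ A j)
    (B : Fin n → ℝ) (hB : ∀ i, 0 < B i)
    (A₀ : EuclideanSpace ℝ (Fin d)) (hA₀ : A₀ ∉ Set.range A) :
    (∀ x, ∑ i, B i * dist A₀ (A i) ≤ ∑ i, B i * dist x (A i)) ↔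
      ∑ i, (B i / ‖A i - A₀‖) • (A i - A₀) = 0 := by
  have hne : ∀ i, A₀ ≠ A i := fun i h => hA₀ ⟨i, h.symm⟩
  have hnz : ∀ i, ‖A i - A₀‖ ≠ 0 := fun i =>
    norm_ne_zero_iff.2 (sub_ne_zero.2 (fun h => hne i h.symm))
  set v := ∑ i, (B i / ‖A i - A₀‖) • (A i - A₀) with hv
  constructor
  · intro hmin
    have hF : HasFDerivAt (fun x => ∑ i, B i * dist x (A i))
        (∑ i : Fin n, B i • (‖A₀ - A i‖⁻¹ • innerSL ℝ (A₀ - A i))) A₀ :=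
      HasFDerivAt.fun_sum fun i _ => (dist_hasFDerivAt' (A i) A₀ (hne i)).const_mul (B i)
    have hloc : IsLocalMin (fun x => ∑ i, B i * dist x (A i)) A₀ :=
      Filter.Eventually.of_forall hmin
    have hz := hloc.hasFDerivAt_eq_zero hF
    have hzv : (∑ i : Fin n, B i • (‖A₀ - A i‖⁻¹ • innerSL ℝ (A₀ - A i))) v = 0 := by
      rw [hz]; rfl
    have hvv : (inner ℝ v v : ℝ) = 0 := by
      have : (∑ i : Fin n, B i • (‖A₀ - A i‖⁻¹ • innerSL ℝ (A₀ - A i))) v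
          = - (inner ℝ v v : ℝ) := by
        rw [ContinuousLinearMap.sum_apply]
        rw [hv, sum_inner]
        rw [← Finset.sum_neg_distrib]
        refine Finset.sum_congr rfl fun i _ => ?_
        simp only [ContinuousLinearMap.smul_apply, innerSL_apply_apply, smul_eq_mul]
        rw [real_inner_smul_left]
        have h1 : (inner ℝ (A₀ - A i) v : ℝ) = - inner ℝ (A i - A₀) v := by
          rw [← inner_neg_left]; congr 1; abel
        rw [h1, norm_sub_rev]
        field_simp
        rfl
      rw [hzv] at this
      linarith [this]
    exact inner_self_eq_zero.1 hvv
  · intro hzero x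
    have key : ∀ i, B i * dist A₀ (A i)
        = (B i / ‖A i - A₀‖) * (inner ℝ (A i - A₀) (A i - x) : ℝ)
          + (B i / ‖A i - A₀‖) * (inner ℝ (A i - A₀) (x - A₀) : ℝ) := by
      intro i
      have : (inner ℝ (A i - A₀) (A i - x) : ℝ) + inner ℝ (A i - A₀) (x - A₀)
          = inner ℝ (A i - A₀) (A i - A₀) := by
        rw [← inner_add_right]; congr 1; abel
      rw [mul_comm (B i), mul_comm (B i / _), mul_comm (B i / _), ← add_mul, this,
        real_inner_self_eq_norm_sq, dist_eq_norm, norm_sub_rev]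
      field_simp [hnz i]
    calc ∑ i, B i * dist A₀ (A i)
        = ∑ i, ((B i / ‖A i - A₀‖) * (inner ℝ (A i - A₀) (A i - x) : ℝ))
          + ∑ i, ((B i / ‖A i - A₀‖) * (inner ℝ (A i - A₀) (x - A₀) : ℝ)) := by
          rw [← Finset.sum_add_distrib]; exact Finset.sum_congr rfl fun i _ => key i
      _ = ∑ i, ((B i / ‖A i - A₀‖) * (inner ℝ (A i - A₀) (A i - x) : ℝ)) := by
          have : ∑ i, ((B i / ‖A i - A₀‖) * (inner ℝ (A i - A₀) (x - A₀) : ℝ))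
              = (inner ℝ v (x - A₀) : ℝ) := by
            rw [hv, sum_inner]
            exact Finset.sum_congr rfl fun i _ => (real_inner_smul_left _ _ _).symm
          rw [this, hzero, inner_zero_left, add_zero]
      _ ≤ ∑ i, B i * dist x (A i) := by
          refine Finset.sum_le_sum fun i _ => ?_
          have hcs := real_inner_le_norm (A i - A₀) (A i - x)
          have hpos : 0 < B i / ‖A i - A₀‖ :=
            div_pos (hB i) ((hnz i).lt_of_le' (norm_nonneg _))
          calc (B i / ‖A i - A₀‖) * (inner ℝ (A i - A₀) (A i - x) : ℝ)
              ≤ (B i / ‖A i - A₀‖) * (‖A i - A₀‖ * ‖A i - x‖) :=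
                mul_le_mul_of_nonneg_left hcs hpos.le
            _ = B i * dist x (A i) := by
                rw [dist_eq_norm, norm_sub_rev x]
                field_simp [hnz i]
end

section
/- Let A_1, …, A_n (n ≥ 3) be pairwise distinct points in a Euclidean space ℝ^d with positive weights B_1, …, B_n, and suppose A_0 is a minimizer of the weighted Fermat objective f(x) = Σ_{i=1}^n B_i·dist(x, A_i) with A_0 ∉ {A_1, …, A_n}. Write a_{0i} = dist(A_0, A_i) and a_{ij} = dist(A_i, A_j). Then for every j ∈ {2, …, n}: Σ_{i=2}^n (B_i/a_{0i})·(a_{01}² + a_{0i}² − a_{1i}²) − Σ_{i=1, i≠j}^n (B_i/a_{0i})·(a_{0j}² + a_{0i}² − a_{ji}²) = −2·(B_1·a_{01} − B_j·a_{0j}). -/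
open Finset

private lemma hasFDerivAt_norm_sub {E : Type*} [NormedAddCommGroup E]
    [InnerProductSpace ℝ E] (a x : E) (h : x ≠ a) :
    HasFDerivAt (fun y => ‖y - a‖) ((‖x - a‖)⁻¹ • (innerSL ℝ (x - a))) x := by
  have h0 : x - a ≠ 0 := sub_ne_zero.2 h
  have hn0 : ‖x - a‖ ≠ 0 := norm_ne_zero_iff.2 h0
  have h1 : HasFDerivAt (fun y : E => y - a) (ContinuousLinearMap.id ℝ E) x :=
    (hasFDerivAt_id x).sub_const a
  have h2 := h1.norm_sq
  have hne : ‖x - a‖ ^ 2 ≠ 0 := pow_ne_zero _ hn0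
  have h3 := h2.sqrt hne
  have hfun : (fun y : E => ‖y - a‖) = fun y => Real.sqrt (‖y - a‖ ^ 2) :=
    funext fun y => (Real.sqrt_sq (norm_nonneg _)).symm
  rw [hfun]
  convert h3 using 1
  ext v
  simp only [ContinuousLinearMap.coe_smul', Pi.smul_apply, innerSL_apply_apply,
    ContinuousLinearMap.smul_apply, ContinuousLinearMap.coe_comp',
    Function.comp_apply, ContinuousLinearMap.coe_id', id_eq,
    Real.sqrt_sq (norm_nonneg (x - a)), smul_eq_mul, two_smul,
    ContinuousLinearMap.add_apply]
  field_simp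
  ring

/-- **The Euclidean Fermat–Torricelli–Fréchet equations.**
If `A₀` is a weighted floating Fermat–Torricelli point of the points `A 0, …, A (n-1)`
(with `A 0` playing the role of the first vertex `A_1`), then for every index `j`
different from the first one,
`∑_{i≠1} (B i / a_{0i})(a_{01}² + a_{0i}² − a_{1i}²)
  − ∑_{i≠j} (B i / a_{0i})(a_{0j}² + a_{0i}² − a_{ji}²)
  = −2 (B_1 a_{01} − B_j a_{0j})`. -/
theorem weighted_fermat_frechet_equations
    (n d : ℕ) (hn : 3 ≤ n)
    (A : Fin n → EuclideanSpace ℝ (Fin d))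
    (hA : ∀ i j, i ≠ j → A i ≠ A j)
    (B : Fin n → ℝ) (hB : ∀ i, 0 < B i)
    (A₀ : EuclideanSpace ℝ (Fin d)) (hA₀ : A₀ ∉ Set.range A)
    (hmin : ∀ x, ∑ i, B i * dist A₀ (A i) ≤ ∑ i, B i * dist x (A i)) :
    ∀ j : Fin n, j ≠ ⟨0, by omega⟩ →
      (∑ i ∈ Finset.univ.erase ⟨0, by omega⟩,
          (B i / dist A₀ (A i)) *
            (dist A₀ (A ⟨0, by omega⟩) ^ 2 + dist A₀ (A i) ^ 2 -
              dist (A ⟨0, by omega⟩) (A i) ^ 2)) -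
        (∑ i ∈ Finset.univ.erase j,
          (B i / dist A₀ (A i)) *
            (dist A₀ (A j) ^ 2 + dist A₀ (A i) ^ 2 - dist (A j) (A i) ^ 2)) =
      -2 * (B ⟨0, by omega⟩ * dist A₀ (A ⟨0, by omega⟩) - B j * dist A₀ (A j)) := by
  have hne : ∀ i, A₀ ≠ A i := fun i h => hA₀ ⟨i, h.symm⟩
  have hd0 : ∀ i, dist A₀ (A i) ≠ 0 := fun i => dist_ne_zero.2 (hne i)
  -- derivative of the objective
  have hF : HasFDerivAt (fun x => ∑ i, B i * dist x (A i))
      (∑ i, B i • ((dist A₀ (A i))⁻¹ • (innerSL ℝ (A₀ - A i)))) A₀ := by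
    apply HasFDerivAt.fun_sum
    intro i _
    have := (hasFDerivAt_norm_sub (A i) A₀ (hne i)).const_mul (B i)
    simp only [dist_eq_norm]
    convert this using 2
  have hzero : (∑ i, B i • ((dist A₀ (A i))⁻¹ • (innerSL ℝ (A₀ - A i)))) = 0 := by
    refine IsLocalMin.hasFDerivAt_eq_zero ?_ hF
    exact Filter.Eventually.of_forall hmin
  -- the gradient condition applied to any vector
  have key : ∀ v : EuclideanSpace ℝ (Fin d),
      ∑ i, (B i / dist A₀ (A i)) * (inner ℝ (A₀ - A i) v : ℝ) = 0 := by
    intro v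
    have h := congrArg (fun L : EuclideanSpace ℝ (Fin d) →L[ℝ] ℝ => L v) hzero
    simp only [ContinuousLinearMap.sum_apply, ContinuousLinearMap.smul_apply,
      innerSL_apply_apply, ContinuousLinearMap.zero_apply, smul_eq_mul] at h
    rw [← h]
    refine Finset.sum_congr rfl fun i _ => ?_
    rw [div_eq_mul_inv]
    ring
  -- the main computation for each index k
  have main : ∀ k : Fin n,
      (∑ i ∈ Finset.univ.erase k,
          (B i / dist A₀ (A i)) *
            (dist A₀ (A k) ^ 2 + dist A₀ (A i) ^ 2 - dist (A k) (A i) ^ 2)) =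
      -2 * (B k * dist A₀ (A k)) := by
    intro k
    have hterm : ∀ i : Fin n,
        (B i / dist A₀ (A i)) *
            (dist A₀ (A k) ^ 2 + dist A₀ (A i) ^ 2 - dist (A k) (A i) ^ 2)
        = 2 * ((B i / dist A₀ (A i)) * (inner ℝ (A₀ - A i) (A₀ - A k) : ℝ)) := by
      intro i
      have h1 : dist (A k) (A i) = ‖(A₀ - A i) - (A₀ - A k)‖ := by
        rw [dist_eq_norm]
        congr 1
        abel
      have h2 : dist A₀ (A k) = ‖A₀ - A k‖ := dist_eq_norm _ _
      have h3 : dist A₀ (A i) = ‖A₀ - A i‖ := dist_eq_norm _ _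
      have h4 : ‖(A₀ - A i) - (A₀ - A k)‖ ^ 2
          = ‖A₀ - A i‖ ^ 2 - 2 * (inner ℝ (A₀ - A i) (A₀ - A k) : ℝ) + ‖A₀ - A k‖ ^ 2 :=
        norm_sub_sq_real _ _
      rw [h1, h2, h3, h4]
      ring
    calc (∑ i ∈ Finset.univ.erase k,
          (B i / dist A₀ (A i)) *
            (dist A₀ (A k) ^ 2 + dist A₀ (A i) ^ 2 - dist (A k) (A i) ^ 2))
        = (∑ i, (B i / dist A₀ (A i)) *
            (dist A₀ (A k) ^ 2 + dist A₀ (A i) ^ 2 - dist (A k) (A i) ^ 2))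
          - (B k / dist A₀ (A k)) *
            (dist A₀ (A k) ^ 2 + dist A₀ (A k) ^ 2 - dist (A k) (A k) ^ 2) := by
          have := Finset.add_sum_erase Finset.univ
            (fun i => (B i / dist A₀ (A i)) *
              (dist A₀ (A k) ^ 2 + dist A₀ (A i) ^ 2 - dist (A k) (A i) ^ 2))
            (Finset.mem_univ k)
          linarith
      _ = 2 * (∑ i, (B i / dist A₀ (A i)) * (inner ℝ (A₀ - A i) (A₀ - A k) : ℝ))
          - (B k / dist A₀ (A k)) * (2 * dist A₀ (A k) ^ 2) := by
          rw [Finset.mul_sum]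
          congr 1
          · exact Finset.sum_congr rfl fun i _ => hterm i
          · rw [dist_self]; ring
      _ = -2 * (B k * dist A₀ (A k)) := by
          rw [key (A₀ - A k)]
          field_simp [hd0 k]
          ring
  intro j _
  rw [main ⟨0, by omega⟩, main j]
  ring
end

section
/- Let A_1, A_2, A_3, A_4 be affinely independent points in the Euclidean space ℝ³ with positive weights B_1, B_2, B_3, B_4, and suppose the point A_0 minimizes the weighted Fermat objective f(x) = Σ_{i=1}^{4} B_i·dist(x, A_i) and lies in the interior of the tetrahedron A_1A_2A_3A_4 (in particular A_0 ∉ {A_1, A_2, A_3, A_4}). Write a_i = dist(A_0, A_i) and, for each i, Vol_i = the Lebesgue volume of the convex hull of {A_0} ∪ {A_k : k ∈ {1,2,3,4}, k ≠ i}. Then for all i, j ∈ {1,2,3,4}: B_i · a_j · Vol_j = B_j · a_i · Vol_i; equivalently, the ratio B_i/(a_i·Vol_i) is the same for all i, which is the necessary condition determining the position of the weighted Fermat–Torricelli tree inside the tetrahedron. -/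
open MeasureTheory Pointwise


lemma hasFDerivAt_dist_pt {E : Type*} [NormedAddCommGroup E] [InnerProductSpace ℝ E]
    (a x₀ : E) (h : x₀ ≠ a) :
    HasFDerivAt (fun x => dist x a) (‖x₀ - a‖⁻¹ • (innerSL ℝ (x₀ - a))) x₀ := by
  have hsub : HasFDerivAt (fun x : E => x - a) (ContinuousLinearMap.id ℝ E) x₀ :=
    (hasFDerivAt_id x₀).sub_const a
  have hq : HasFDerivAt (fun x : E => (inner ℝ (x - a) (x - a) : ℝ))
      ((fderivInnerCLM ℝ (x₀ - a, x₀ - a)).comp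
        ((ContinuousLinearMap.id ℝ E).prod (ContinuousLinearMap.id ℝ E))) x₀ :=
    hsub.inner ℝ hsub
  have hn0 : ‖x₀ - a‖ ≠ 0 := by
    simpa [sub_eq_zero] using h
  have hne : (inner ℝ (x₀ - a) (x₀ - a) : ℝ) ≠ 0 := by
    rw [real_inner_self_eq_norm_sq]
    positivity
  have hs := hq.sqrt hne
  have heq : (fun x : E => Real.sqrt (inner ℝ (x - a) (x - a) : ℝ)) = fun x => dist x a := by
    funext x
    rw [dist_eq_norm, norm_eq_sqrt_re_inner (𝕜 := ℝ)]
    norm_num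
  rw [heq] at hs
  convert hs using 1
  ext v
  simp only [ContinuousLinearMap.coe_smul', Pi.smul_apply, innerSL_apply_apply,
    ContinuousLinearMap.coe_comp', Function.comp_apply, ContinuousLinearMap.prod_apply,
    ContinuousLinearMap.coe_id', id_eq, fderivInnerCLM_apply, smul_eq_mul]
  rw [real_inner_comm v (x₀ - a), real_inner_self_eq_norm_sq]
  rw [Real.sqrt_sq (norm_nonneg _)]
  field_simp
  ring

lemma fermat_balance {n : ℕ} {E : Type*} [NormedAddCommGroup E] [InnerProductSpace ℝ E]
    (A : Fin n → E) (B : Fin n → ℝ) (A₀ : E)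
    (hmin : ∀ x, ∑ i, B i * dist A₀ (A i) ≤ ∑ i, B i * dist x (A i))
    (ha : ∀ i, A₀ ≠ A i) :
    ∑ i, (B i / dist A₀ (A i)) • (A i - A₀) = 0 := by
  have hd : ∀ i, HasFDerivAt (fun x => B i * dist x (A i))
      (B i • (‖A₀ - A i‖⁻¹ • (innerSL ℝ (A₀ - A i)))) A₀ :=
    fun i => (hasFDerivAt_dist_pt (A i) A₀ (ha i)).const_mul (B i)
  have hf : HasFDerivAt (fun x => ∑ i, B i * dist x (A i))
      (∑ i, B i • (‖A₀ - A i‖⁻¹ • (innerSL ℝ (A₀ - A i)))) A₀ :=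
    HasFDerivAt.fun_sum fun i _ => hd i
  have hloc : IsLocalMin (fun x => ∑ i, B i * dist x (A i)) A₀ :=
    Filter.Eventually.of_forall fun x => hmin x
  have h0 := hloc.hasFDerivAt_eq_zero hf
  have key : ∀ v : E, (inner ℝ (∑ i, (B i / dist A₀ (A i)) • (A₀ - A i)) v : ℝ) = 0 := by
    intro v
    have := congrArg (fun (L : E →L[ℝ] ℝ) => L v) h0
    simp only [ContinuousLinearMap.coe_sum', Finset.sum_apply,
      ContinuousLinearMap.coe_smul', Pi.smul_apply, innerSL_apply_apply, smul_eq_mul,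
      ContinuousLinearMap.zero_apply] at this
    rw [sum_inner]
    rw [← this]
    congr 1
    funext i
    rw [real_inner_smul_left, dist_eq_norm]
    ring
  have hz : (∑ i, (B i / dist A₀ (A i)) • (A₀ - A i)) = 0 := by
    have := key (∑ i, (B i / dist A₀ (A i)) • (A₀ - A i))
    exact inner_self_eq_zero.mp this
  calc ∑ i, (B i / dist A₀ (A i)) • (A i - A₀)
      = -∑ i, (B i / dist A₀ (A i)) • (A₀ - A i) := by
        rw [← Finset.sum_neg_distrib]
        congr 1; funext i; rw [← smul_neg, neg_sub]
    _ = 0 := by rw [hz, neg_zero]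

lemma vol_scale
    (A : Fin 4 → EuclideanSpace ℝ (Fin 3))
    (hA : AffineIndependent ℝ A)
    (A₀ : EuclideanSpace ℝ (Fin 3))
    (w : Fin 4 → ℝ) (hw : ∀ m, 0 < w m)
    (key : ∑ m, w m • (A m - A₀) = 0)
    (i j : Fin 4) (hij : j ≠ i) :
    volume (convexHull ℝ ({A₀} ∪ A '' {k | k ≠ j})) =
      ENNReal.ofReal (w j / w i) * volume (convexHull ℝ ({A₀} ∪ A '' {k | k ≠ i})) := by
  set x : Fin 4 → EuclideanSpace ℝ (Fin 3) := fun m => A m - A₀ with hx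
  have hsplit : ∀ f : Fin 4 → EuclideanSpace ℝ (Fin 3),
      ∑ m, f m = f i + ∑ m : {m : Fin 4 // m ≠ i}, f ↑m := by
    intro f
    rw [← Finset.sum_subtype (Finset.univ.erase i) (fun m => by simp [Finset.mem_erase]) f]
    exact (Finset.add_sum_erase Finset.univ f (Finset.mem_univ i)).symm
  -- linear independence of the three edge vectors omitting `i`
  have li : LinearIndependent ℝ (fun m : {m : Fin 4 // m ≠ i} => x ↑m) := by
    rw [Fintype.linearIndependent_iff]
    intro g hg
    set c : Fin 4 → ℝ := fun m => if h : m = i then 0 else g ⟨m, h⟩ with hc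
    have hci : c i = 0 := dif_pos rfl
    have hcs : ∑ m, c m • x m = 0 := by
      rw [hsplit (fun m => c m • x m)]
      have h2 : ∑ m : {m : Fin 4 // m ≠ i}, c ↑m • x ↑m = 0 := by
        rw [← hg]
        congr 1
        funext m
        simp [hc, m.2]
      rw [hci, h2, zero_smul, add_zero]
    set W : ℝ := ∑ m, w m with hW
    have hWpos : 0 < W := Finset.sum_pos (fun m _ => hw m) ⟨i, Finset.mem_univ i⟩
    set S : ℝ := ∑ m, c m with hS
    set d : Fin 4 → ℝ := fun m => c m - (S / W) * w m with hd
    have hd0 : ∑ m, d m = 0 := by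
      simp only [hd, Finset.sum_sub_distrib, ← Finset.mul_sum, ← hS, ← hW]
      field_simp
      ring
    have hdx : ∑ m, d m • x m = 0 := by
      simp only [hd, sub_smul, Finset.sum_sub_distrib, hcs, mul_smul, ← Finset.smul_sum]
      simp [key]
      exact Or.inr key
    have hdA : ∑ m, d m • A m = 0 := by
      have h3 : ∑ m, d m • A m = ∑ m, d m • x m + (∑ m, d m) • A₀ := by
        rw [Finset.sum_smul, ← Finset.sum_add_distrib]
        refine Finset.sum_congr rfl fun m _ => ?_
        simp only [hx, smul_sub]
        abel
      rw [h3, hdx, hd0, zero_smul, add_zero]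
    have hdz : ∀ m, d m = 0 := fun m =>
      hA.eq_zero_of_sum_eq_zero hd0 hdA m (Finset.mem_univ m)
    have hSz : S / W = 0 := by
      have h4 := hdz i
      simp only [hd] at h4
      rw [hci, zero_sub, neg_eq_zero] at h4
      rcases mul_eq_zero.mp h4 with h | h
      · exact h
      · exact absurd h (hw i).ne'
    intro m
    have h5 := hdz m
    simp only [hd, hSz, zero_mul, sub_zero, hc, dif_neg m.2] at h5
    exact h5
  haveI : Nonempty {m : Fin 4 // m ≠ i} := ⟨⟨j, hij⟩⟩
  have hfr : Fintype.card {m : Fin 4 // m ≠ i} =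
      Module.finrank ℝ (EuclideanSpace ℝ (Fin 3)) := by
    rw [finrank_euclideanSpace_fin]
    simp [Fintype.card_subtype_compl]
  set b := basisOfLinearIndependentOfCardEqFinrank li hfr with hbdef
  have hb : ∀ m : {m : Fin 4 // m ≠ i}, b m = x ↑m := fun m => by
    rw [hbdef, coe_basisOfLinearIndependentOfCardEqFinrank]
  set j₀ : {m : Fin 4 // m ≠ i} := ⟨j, hij⟩ with hj₀
  set c : {m : Fin 4 // m ≠ i} → ℝ := fun m => -(w ↑m / w i) with hcdef
  have hxi : x i = ∑ m : {m : Fin 4 // m ≠ i}, c m • x ↑m := by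
    have h1 := hsplit (fun m => w m • x m)
    rw [key] at h1
    have h2 : w i • x i = -∑ m : {m : Fin 4 // m ≠ i}, w ↑m • x ↑m :=
      eq_neg_of_add_eq_zero_left h1.symm
    have h3 : x i = (-(w i)⁻¹) • ∑ m : {m : Fin 4 // m ≠ i}, w ↑m • x ↑m := by
      rw [neg_smul, ← smul_neg, ← h2, smul_smul, inv_mul_cancel₀ (hw i).ne', one_smul]
    rw [h3, Finset.smul_sum]
    refine Finset.sum_congr rfl fun m _ => ?_
    rw [smul_smul]
    congr 1
    simp only [hcdef]
    field_simp
  set f : {m : Fin 4 // m ≠ i} → EuclideanSpace ℝ (Fin 3) :=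
    fun m => if m = j₀ then x i else x ↑m with hfdef
  set L := b.constr ℝ f with hLdef
  have hLb : ∀ m : {m : Fin 4 // m ≠ i}, L (x ↑m) = f m := fun m => by
    rw [← hb m, hLdef, Module.Basis.constr_basis]
  have hmat : LinearMap.toMatrix b b L = (1 : Matrix _ _ ℝ).updateCol j₀ c := by
    ext m' m
    rw [LinearMap.toMatrix_apply, Matrix.updateCol_apply]
    by_cases h : m = j₀
    · rw [if_pos h, h, hLdef, Module.Basis.constr_basis]
      have hxib : x i = ∑ m : {m : Fin 4 // m ≠ i}, c m • b m := by
        rw [hxi]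
        exact Finset.sum_congr rfl fun m _ => by rw [hb m]
      simp only [hfdef, if_pos rfl, hxib, map_sum, _root_.map_smul, Module.Basis.repr_self,
        Finsupp.smul_single, smul_eq_mul, mul_one, Finsupp.coe_finset_sum,
        Finset.sum_apply, Finsupp.single_apply]
      simp
    · rw [if_neg h, hLdef, Module.Basis.constr_basis]
      simp only [hfdef, if_neg h]
      rw [← hb m, Module.Basis.repr_self]
      rw [Finsupp.single_apply, Matrix.one_apply]
      exact if_congr eq_comm rfl rfl
  have hdet : LinearMap.det L = -(w j / w i) := by
    rw [← LinearMap.det_toMatrix b, hmat, ← Matrix.cramer_apply, Matrix.cramer_one]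
    rfl
  have himg : L '' ({0} ∪ x '' {k | k ≠ i}) = {0} ∪ x '' {k | k ≠ j} := by
    rw [Set.image_union, Set.image_singleton, map_zero]
    congr 1
    ext y
    simp only [Set.mem_image, Set.mem_setOf_eq]
    constructor
    · rintro ⟨z, ⟨m, hm, rfl⟩, rfl⟩
      by_cases hmj : m = j
      · subst hmj
        refine ⟨i, Ne.symm hij, ?_⟩
        rw [hLb ⟨m, hm⟩]
        simp [hfdef, hj₀]
      · refine ⟨m, hmj, ?_⟩
        rw [hLb ⟨m, hm⟩]
        simp only [hfdef]
        rw [if_neg (by simp [hj₀, Subtype.ext_iff, hmj])]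
    · rintro ⟨m, hm, rfl⟩
      by_cases hmi : m = i
      · subst hmi
        refine ⟨x j, ⟨j, hij, rfl⟩, ?_⟩
        rw [hLb ⟨j, hij⟩]
        simp [hfdef, hj₀]
      · refine ⟨x m, ⟨m, hmi, rfl⟩, ?_⟩
        rw [hLb ⟨m, hmi⟩]
        simp only [hfdef]
        rw [if_neg (by simp [hj₀, Subtype.ext_iff, hm])]
  have hvadd : ∀ s : Set (Fin 4), volume (convexHull ℝ ({A₀} ∪ A '' s)) =
      volume (convexHull ℝ (({0} : Set (EuclideanSpace ℝ (Fin 3))) ∪ x '' s)) := by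
    intro s
    have h1 : {A₀} ∪ A '' s = A₀ +ᵥ (({0} : Set (EuclideanSpace ℝ (Fin 3))) ∪ x '' s) := by
      rw [Set.vadd_set_union, Set.vadd_set_singleton]
      congr 1
      · simp
      · rw [← Set.image_vadd, Set.image_image]
        refine Set.image_congr fun m _ => ?_
        simp [hx]
    rw [h1, convexHull_vadd, measure_vadd]
  have himgHull : L '' (convexHull ℝ (({0} : Set (EuclideanSpace ℝ (Fin 3))) ∪ x '' {k | k ≠ i}))
      = convexHull ℝ (({0} : Set (EuclideanSpace ℝ (Fin 3))) ∪ x '' {k | k ≠ j}) := by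
    rw [L.image_convexHull, himg]
  rw [hvadd, hvadd, ← himgHull, Measure.addHaar_image_linearMap, hdet, abs_neg,
    abs_of_nonneg (div_nonneg (hw j).le (hw i).le)]

/-- **Location equations for the weighted Fermat–Torricelli tree of a tetrahedron.**
If `A₀` is the weighted Fermat–Torricelli point lying in the interior of the
tetrahedron `A_1A_2A_3A_4 ⊂ ℝ³`, then `B i / (a_i · Vol_i)` is the same for all `i`,
i.e. `B i * a j * Vol j = B j * a i * Vol i`, where `a_i = dist A₀ (A i)` and
`Vol_i` is the volume of the tetrahedron on `A₀` and the vertices other than `A i`. -/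
theorem weighted_fermat_tetrahedron_volume_relation
    (A : Fin 4 → EuclideanSpace ℝ (Fin 3))
    (hA : AffineIndependent ℝ A)
    (B : Fin 4 → ℝ) (hB : ∀ i, 0 < B i)
    (A₀ : EuclideanSpace ℝ (Fin 3))
    (hmin : ∀ x, ∑ i, B i * dist A₀ (A i) ≤ ∑ i, B i * dist x (A i))
    (hint : A₀ ∈ interior (convexHull ℝ (Set.range A)))
    (hnv : A₀ ∉ Set.range A) :
    ∀ i j : Fin 4,
      B i * dist A₀ (A j) *
          (volume (convexHull ℝ ({A₀} ∪ A '' {k | k ≠ j}))).toReal =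
        B j * dist A₀ (A i) *
          (volume (convexHull ℝ ({A₀} ∪ A '' {k | k ≠ i}))).toReal := by
  have ha : ∀ m, A₀ ≠ A m := fun m h => hnv ⟨m, h.symm⟩
  have apos : ∀ m, 0 < dist A₀ (A m) := fun m => dist_pos.mpr (ha m)
  have hw : ∀ m, 0 < B m / dist A₀ (A m) := fun m => div_pos (hB m) (apos m)
  have key : ∑ m, (B m / dist A₀ (A m)) • (A m - A₀) = 0 :=
    fermat_balance A B A₀ hmin ha
  intro i j
  by_cases hij : i = j
  · subst hij; rfl
  · have hfin : volume (convexHull ℝ ({A₀} ∪ A '' {k | k ≠ i})) ≠ ⊤ :=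
      (((Set.finite_singleton A₀).union ((Set.toFinite _).image A)).isCompact_convexHull (𝕜 := ℝ)).measure_lt_top.ne
    have hv := vol_scale A hA A₀ (fun m => B m / dist A₀ (A m)) hw key i j (Ne.symm hij)
    rw [hv, ENNReal.toReal_mul, ENNReal.toReal_ofReal
      (div_nonneg (hw j).le (hw i).le)]
    have harith : B i * dist A₀ (A j) * (B j / dist A₀ (A j) / (B i / dist A₀ (A i)))
        = B j * dist A₀ (A i) := by
      field_simp [(hB i).ne', (apos i).ne', (apos j).ne']
    linear_combination (volume (convexHull ℝ ({A₀} ∪ A '' {k | k ≠ i}))).toReal * harith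
end
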